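/- arXiv:2506.07306 — 2 statements merged into one kernel-verified Lean document; each statement's English description precedes it below -/
import Mathlib

section
/- Let w ∈ S_n and fix i. For subsets U, U' of φ_i(w), we have w_{U,i} ≤ w_{U',i} in Bruhat order if and only if U ⊆ U'. Consequently the set {w_{U,i} : U ⊆ φ_i(w)} forms a Boolean lattice under Bruhat order. -/
/-- Coxeter length of a permutation of `Fin n`: number of inversions. -/
def len {n : ℕ} (w : Equiv.Perm (Fin n)) : ℕ :=
  (Finset.univ.filter (fun p : Fin n × Fin n => p.1 < p.2 ∧ w p.2 < w p.1)).card

/-- The longest permutation `w₀` of `S_n` (reversal). -/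
def longest (n : ℕ) : Equiv.Perm (Fin n) := Fin.revPerm

/-- The simple transposition `s_i` (1-based index `i ∈ [n-1]`), exchanging
positions `i` and `i+1` of the one-line notation. -/
def simpleRefl (n i : ℕ) : Equiv.Perm (Fin n) :=
  if h : 1 ≤ i ∧ i < n then Equiv.swap ⟨i - 1, by omega⟩ ⟨i, by omega⟩ else 1

/-- The Hecke (Demazure) up-operator: `w * τ_i = w` if `ℓ(w s_i) < ℓ(w)`, else `w s_i`. -/
def heckeStar {n : ℕ} (w : Equiv.Perm (Fin n)) (i : ℕ) : Equiv.Perm (Fin n) :=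
  if len (w * simpleRefl n i) < len w then w else w * simpleRefl n i

/-- The down-operator: `w □ τ_i = w` if `ℓ(w s_i) > ℓ(w)`, else `w s_i`. -/
def heckeSq {n : ℕ} (w : Equiv.Perm (Fin n)) (i : ℕ) : Equiv.Perm (Fin n) :=
  if len w < len (w * simpleRefl n i) then w else w * simpleRefl n i

/-- The rank function of a permutation: `rk_w(a,b) = #{i ∈ [a] : w(i) ∈ [b]}`
(here encoded 0-based: positions `m` with `m < a` and values `w(m) < b`). -/
def rk {n : ℕ} (w : Equiv.Perm (Fin n)) (a b : ℕ) : ℕ :=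
  (Finset.univ.filter (fun m : Fin n => (m : ℕ) < a ∧ (w m : ℕ) < b)).card

/-- Bruhat order on `S_n`: the reflexive-transitive closure of the covering
relation `u ⋖ u t` with `t` a transposition and `ℓ(ut) = ℓ(u) + 1`. -/
def bruhatLE {n : ℕ} (u v : Equiv.Perm (Fin n)) : Prop :=
  Relation.ReflTransGen
    (fun x y => (∃ t : Equiv.Perm (Fin n), t.IsSwap ∧ y = x * t) ∧ len y = len x + 1) u v

/-- `(a, w a)` is a neighbor of `(i, w i)` in the graph of `w ∈ S_n`:
`i ≤ a`, `w i ≤ w a`, `(a, w a) ≠ (i, w i)`, and no other point of the graph of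
`w` lies in the rectangle `[i,a] × [w i, w a]`. -/
def isNbrF {n : ℕ} (w : Equiv.Perm (Fin n)) (i a : Fin n) : Prop :=
  i ≤ a ∧ w i ≤ w a ∧ (a, w a) ≠ (i, w i) ∧
    ∀ a' : Fin n, i ≤ a' → a' ≤ a → w i ≤ w a' → w a' ≤ w a → a' = i ∨ a' = a

/-- For `U = {i_1 < i_2 < ⋯ < i_k}`, the permutation
`w_{U,i} = w t_{i,i_k} t_{i,i_{k-1}} ⋯ t_{i,i_1}` (and `w_{∅,i} = w`). -/
def wUF {n : ℕ} (w : Equiv.Perm (Fin n)) (i : Fin n) (U : Finset (Fin n)) :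
    Equiv.Perm (Fin n) :=
  ((U.sort (· ≤ ·)).reverse).foldl (fun v j => v * Equiv.swap i j) w

/-!
Adding to `U` a neighbor `a` that lies left of all of `U` multiplies `w_{U,i}` on the right by
`t_{i,a}`; since the rectangle of `a` in the graph of `w` is empty, no graph point of `w_{U,i}`
lies strictly between the two swapped ones, so the length grows by exactly one and
`ℓ(w_{U,i}) = ℓ(w) + #U`. Inserting an arbitrary neighbor also changes `w_{U,i}` by a
transposition (a conjugate of `t_{i,a}`), so for `U ⊆ U'` adding the elements of `U' \ U` one
at a time is a chain of Bruhat covers.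

Conversely, the only neighbor in the rectangle of a neighbor `a` is `a` itself, which gives
`rk_{w_{U,i}}(a, w a) = rk_w(a, w a) - [a ∈ U]`. Rank functions decrease along Bruhat covers,
so `w_{U,i} ≤ w_{U',i}` forces every `a ∈ U` into `U'`.
-/

open Equiv Finset

section WUF

variable {n : ℕ} (w : Perm (Fin n)) (i : Fin n)

@[simp] lemma wUF_empty : wUF w i ∅ = w := by
  simp [wUF]

lemma wUF_insert_of_forall_lt {a : Fin n} {s : Finset (Fin n)} (h : ∀ b ∈ s, a < b) :
    wUF w i (insert a s) = wUF w i s * swap i a := by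
  have has : a ∉ s := fun ha => lt_irrefl a (h a ha)
  simp [wUF, sort_insert _ (fun b hb => (h b hb).le) has]

lemma wUF_apply_of_notMem {m : Fin n} {s : Finset (Fin n)} (hm : m ∉ s) (hmi : m ≠ i) :
    wUF w i s m = w m := by
  induction s using Finset.induction_on_min with
  | empty => simp
  | insert a s h ih =>
    rw [mem_insert, not_or] at hm
    rw [wUF_insert_of_forall_lt w i h, Perm.mul_apply, swap_apply_of_ne_of_ne hmi hm.1, ih hm.2]

lemma wUF_apply_self {s : Finset (Fin n)} (hi : i ∉ s) (hs : s.Nonempty) :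
    wUF w i s i = w (s.min' hs) := by
  have hmin : s.min' hs ∉ s.erase (s.min' hs) := notMem_erase _ _
  conv_lhs => rw [← insert_erase (s.min'_mem hs)]
  rw [wUF_insert_of_forall_lt w i (fun b hb => s.min'_lt_of_mem_erase_min' hs hb),
    Perm.mul_apply, swap_apply_left,
    wUF_apply_of_notMem w i hmin (fun h => hi (h ▸ s.min'_mem hs))]

lemma exists_wUF_insert_eq_mul_swap {a : Fin n} {s : Finset (Fin n)} (has : a ∉ s)
    (hai : a ≠ i) : ∃ x y, x ≠ y ∧ wUF w i (insert a s) = wUF w i s * swap x y := by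
  induction s using Finset.induction_on_min with
  | empty => exact ⟨i, a, hai.symm, wUF_insert_of_forall_lt w i (by simp)⟩
  | insert b s hb ih =>
    rw [mem_insert, not_or] at has
    rcases lt_or_gt_of_ne has.1 with hab | hba
    · refine ⟨i, a, hai.symm, wUF_insert_of_forall_lt w i ?_⟩
      simp only [mem_insert, forall_eq_or_imp]
      exact ⟨hab, fun c hc => hab.trans (hb c hc)⟩
    · obtain ⟨x, y, hxy, hs⟩ := ih has.2
      have hb' : ∀ c ∈ insert a s, b < c := by
        simp only [mem_insert, forall_eq_or_imp]
        exact ⟨hba, hb⟩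
      -- conjugating a transposition by `swap i b` gives a transposition
      refine ⟨swap i b x, swap i b y, (swap i b).injective.ne hxy, ?_⟩
      rw [insert_comm, wUF_insert_of_forall_lt w i hb', hs,
        wUF_insert_of_forall_lt w i hb, swap_apply_apply, swap_inv, mul_assoc, mul_assoc,
        mul_assoc, swap_mul_self_mul]

end WUF

namespace isNbrF

variable {n : ℕ} {w : Perm (Fin n)} {i a b : Fin n}

lemma lt (h : isNbrF w i a) : i < a := by
  obtain ⟨h1, -, h3, -⟩ := h
  exact lt_of_le_of_ne h1 fun hia => h3 (by rw [hia])

lemma apply_lt (h : isNbrF w i a) : w i < w a :=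
  lt_of_le_of_ne h.2.1 (w.injective.ne h.lt.ne)

lemma eq_of_mem_rectangle (h : isNbrF w i a) {m : Fin n} (him : i < m) (hma : m ≤ a)
    (hwim : w i < w m) (hwma : w m ≤ w a) : m = a :=
  (h.2.2.2 m him.le hma hwim.le hwma).resolve_left him.ne'

lemma apply_lt_of_lt (ha : isNbrF w i a) (hb : isNbrF w i b) (hab : a < b) : w b < w a := by
  by_contra! hle
  exact hab.ne (hb.eq_of_mem_rectangle ha.lt hab.le ha.apply_lt hle)

end isNbrF

lemma Finset.sum_univ_eq_add_add_sum_erase_erase {α M : Type*} [Fintype α] [DecidableEq α]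
    [AddCommMonoid M] (f : α → M) {p a : α} (hpa : p ≠ a) :
    ∑ m, f m = f p + f a + ∑ m ∈ (univ.erase p).erase a, f m := by
  rw [← add_sum_erase _ _ (mem_univ p), ← add_sum_erase _ _ (mem_erase.2 ⟨hpa.symm, mem_univ a⟩),
    add_assoc]

section Rank

variable {n : ℕ}

lemma rk_eq_sum (v : Perm (Fin n)) (x y : ℕ) :
    rk v x y = ∑ m : Fin n, if (m : ℕ) < x ∧ (v m : ℕ) < y then 1 else 0 :=
  card_filter _ _

lemma rk_mul_swap (v : Perm (Fin n)) {p a : Fin n} (hpa : p < a) (hv : v p < v a) (x y : ℕ) :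
    rk (v * swap p a) x y
      + (if (p : ℕ) < x ∧ x ≤ (a : ℕ) ∧ (v p : ℕ) < y ∧ y ≤ (v a : ℕ) then 1 else 0)
      = rk v x y := by
  have hrest : ∀ m ∈ (univ.erase p).erase a, (v * swap p a) m = v m := fun m hm => by
    simp only [mem_erase] at hm
    rw [Perm.mul_apply, swap_apply_of_ne_of_ne hm.2.1 hm.1]
  rw [rk_eq_sum, rk_eq_sum, sum_univ_eq_add_add_sum_erase_erase _ hpa.ne,
    sum_univ_eq_add_add_sum_erase_erase _ hpa.ne, sum_congr rfl fun m hm => by rw [hrest m hm]]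
  simp only [Perm.mul_apply, swap_apply_left, swap_apply_right]
  have : (p : ℕ) < a := hpa
  have : (v p : ℕ) < v a := hv
  split_ifs <;> omega

lemma rk_add_rk (v : Perm (Fin n)) {x₁ x₂ y₁ y₂ : ℕ} (hx : x₁ ≤ x₂) (hy : y₁ ≤ y₂) :
    rk v x₁ y₁ + rk v x₂ y₂ = rk v x₁ y₂ + rk v x₂ y₁
      + #{m : Fin n | x₁ ≤ (m : ℕ) ∧ (m : ℕ) < x₂ ∧ y₁ ≤ (v m : ℕ) ∧ (v m : ℕ) < y₂} := by
  simp only [rk_eq_sum, card_filter, ← sum_add_distrib]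
  refine sum_congr rfl fun m _ => ?_
  split_ifs <;> omega

lemma len_add_sum_rk (v : Perm (Fin n)) :
    len v + ∑ m : Fin n, rk v m (v m) = ∑ m : Fin n, (m : ℕ) := by
  have hlen : len v = ∑ m, #{m' | m' < m ∧ v m < v m'} := by
    rw [len, card_filter, Fintype.sum_prod_type, sum_comm]
    exact sum_congr rfl fun m _ => (card_filter _ _).symm
  rw [hlen, ← sum_add_distrib]
  refine sum_congr rfl fun m _ => ?_
  have hrk : rk v m (v m) = #{m' | m' < m ∧ v m' < v m} := by
    simp only [rk, Fin.lt_def]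
  have hlt : #{m' | m' < m} = (m : ℕ) := by
    rw [filter_gt_eq_Iio, Fin.card_Iio]
  rw [hrk, ← hlt, ← card_filter_add_card_filter_not (s := {m' | m' < m}) (fun m' => v m' < v m),
    filter_filter, filter_filter, add_comm]
  congr 2
  ext m'
  simp only [mem_filter, mem_univ, true_and, not_lt, and_congr_right_iff]
  exact fun hm' => lt_iff_le_and_ne.trans (and_iff_left (v.injective.ne hm'.ne'))

lemma len_mul_swap (v : Perm (Fin n)) {p a : Fin n} (hpa : p < a) (hv : v p < v a) :
    len (v * swap p a) = len v + 1 + 2 * #{m | p < m ∧ m < a ∧ v p < v m ∧ v m < v a} := by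
  set v' := v * swap p a
  set K := #{m | p < m ∧ m < a ∧ v p < v m ∧ v m < v a} with hK
  have hv'p : v' p = v a := by simp [v']
  have hv'a : v' a = v p := by simp [v']
  have hbox : #{m : Fin n | (p : ℕ) ≤ m ∧ (m : ℕ) < a ∧ (v p : ℕ) ≤ v m ∧ (v m : ℕ) < v a}
      = K + 1 := by
    rw [hK, ← card_insert_of_notMem (a := p) (by simp)]
    congr 1
    ext m
    by_cases hm : m = p
    · subst hm; simp [hpa, hv]
    · have hvm : v m ≠ v p := v.injective.ne hm
      simp only [mem_filter, mem_univ, true_and, mem_insert, hm, false_or]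
      omega
  have hcorner : rk v p (v p) + rk v a (v a) = rk v p (v a) + rk v a (v p) + (K + 1) := by
    rw [rk_add_rk v (Fin.le_def.1 hpa.le) (Fin.le_def.1 hv.le), hbox]
  have hrk_p : rk v' p (v a) = rk v p (v a) := by
    simpa using rk_mul_swap v hpa hv p (v a)
  have hrk_a : rk v' a (v p) = rk v a (v p) := by
    simpa using rk_mul_swap v hpa hv a (v p)
  have hrest : ∑ m ∈ (univ.erase p).erase a, rk v' m (v' m) + K
      = ∑ m ∈ (univ.erase p).erase a, rk v m (v m) := by
    rw [hK, card_filter, sum_univ_eq_add_add_sum_erase_erase _ hpa.ne, if_neg (by simp),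
      if_neg (by simp), zero_add, zero_add, ← sum_add_distrib]
    refine sum_congr rfl fun m hm => ?_
    obtain ⟨hma, hmp, -⟩ := by simpa only [mem_erase] using hm
    have hv'm : v' m = v m := by simp [v', swap_apply_of_ne_of_ne hmp hma]
    have hvma : v m ≠ v a := v.injective.ne hma
    rw [hv'm, ← rk_mul_swap v hpa hv m (v m)]
    congr 2
    apply propext
    omega
  have h := len_add_sum_rk v
  have h' := len_add_sum_rk v'
  rw [sum_univ_eq_add_add_sum_erase_erase _ hpa.ne] at h h'
  rw [hv'p, hv'a, hrk_p, hrk_a] at h'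
  omega

end Rank

section Bruhat

variable {n : ℕ}

lemma rk_le_of_cover {u c : Perm (Fin n)} (hswap : ∃ t : Perm (Fin n), t.IsSwap ∧ c = u * t)
    (hlen : len c = len u + 1) (x y : ℕ) : rk c x y ≤ rk u x y := by
  obtain ⟨_, ⟨s, s', hne, rfl⟩, rfl⟩ := hswap
  wlog hss : s < s' generalizing s s'
  · rw [swap_comm] at hlen ⊢
    exact this s' s hne.symm hlen (lt_of_le_of_ne (not_lt.1 hss) hne.symm)
  rcases lt_or_gt_of_ne (u.injective.ne hne) with hu | hu
  · have := rk_mul_swap u hss hu x y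
    omega
  · -- otherwise `u` itself is obtained from `u * swap s s'` by swapping an increasing pair
    have hlen' := len_mul_swap (u * swap s s') hss (by simpa using hu)
    rw [mul_swap_mul_self] at hlen'
    omega

lemma rk_le_of_bruhatLE {u v : Perm (Fin n)} (h : bruhatLE u v) (x y : ℕ) :
    rk v x y ≤ rk u x y := by
  induction h with
  | refl => exact le_rfl
  | tail _ hstep ih => exact (rk_le_of_cover hstep.1 hstep.2 x y).trans ih

end Bruhat

section Neighbors

variable {n : ℕ} {w : Perm (Fin n)} {i : Fin n}

lemma wUF_apply_self_mem_Ico {s : Finset (Fin n)} {a : Fin n} (hs : ∀ b ∈ s, isNbrF w i b)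
    (ha : isNbrF w i a) (has : ∀ b ∈ s, a < b) : wUF w i s i ∈ Set.Ico (w i) (w a) := by
  rcases s.eq_empty_or_nonempty with rfl | hne
  · simpa using ha.apply_lt
  · have hmin := hs _ (s.min'_mem hne)
    rw [wUF_apply_self w i (fun hi => (hs i hi).lt.false) hne]
    exact ⟨hmin.apply_lt.le, ha.apply_lt_of_lt hmin (has _ (s.min'_mem hne))⟩

lemma len_wUF {U : Finset (Fin n)} (hU : ∀ a ∈ U, isNbrF w i a) :
    len (wUF w i U) = len w + #U := by
  induction U using Finset.induction_on_min with
  | empty => simp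
  | insert a s has ih =>
    simp only [mem_insert, forall_eq_or_imp] at hU
    obtain ⟨ha, hs⟩ := hU
    have has' : a ∉ s := fun h => lt_irrefl a (has a h)
    obtain ⟨hwi, hvi⟩ := wUF_apply_self_mem_Ico hs ha has
    set v := wUF w i s
    have hva : v a = w a := wUF_apply_of_notMem w i has' ha.lt.ne'
    -- the rectangle `(i, a) × (v i, v a)` is empty, because that of the neighbor `a` is
    have hempty : #{m | i < m ∧ m < a ∧ v i < v m ∧ v m < v a} = 0 := by
      refine card_eq_zero.2 (filter_eq_empty_iff.2 fun m _ ⟨him, hma, hvim, hvma⟩ => hma.ne ?_)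
      have hvm : v m = w m :=
        wUF_apply_of_notMem w i (fun h => (has m h).asymm hma) him.ne'
      rw [hvm] at hvim hvma
      rw [hva] at hvma
      exact ha.eq_of_mem_rectangle him hma.le (hwi.trans_lt hvim) hvma.le
    rw [wUF_insert_of_forall_lt w i has, len_mul_swap v ha.lt (hva ▸ hvi), hempty,
      card_insert_of_notMem has', ih hs]
    ring

lemma rk_wUF_add_ite {U : Finset (Fin n)} (hU : ∀ a ∈ U, isNbrF w i a) {a : Fin n}
    (ha : isNbrF w i a) : rk (wUF w i U) a (w a) + (if a ∈ U then 1 else 0) = rk w a (w a) := by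
  induction U using Finset.induction_on_min with
  | empty => simp
  | insert b s hbs ih =>
    simp only [mem_insert, forall_eq_or_imp] at hU
    obtain ⟨hb, hs⟩ := hU
    have hbs' : b ∉ s := fun h => lt_irrefl b (hbs b h)
    rw [wUF_insert_of_forall_lt w i hbs]
    obtain ⟨-, hvi⟩ := wUF_apply_self_mem_Ico hs hb hbs
    set v := wUF w i s
    have hvb : v b = w b := wUF_apply_of_notMem w i hbs' hb.lt.ne'
    have hstep := rk_mul_swap v hb.lt (hvb ▸ hvi) a (w a)
    -- inside the rectangle of `b`, the only neighbor is `b` itself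
    have hrect : ((i : ℕ) < a ∧ (a : ℕ) ≤ b ∧ (v i : ℕ) < w a ∧ (w a : ℕ) ≤ v b) ↔ a = b := by
      rw [hvb]
      constructor
      · rintro ⟨-, hab, -, hwab⟩
        by_contra hne
        exact (ha.apply_lt_of_lt hb (lt_of_le_of_ne (Fin.le_def.2 hab) hne)).not_ge
          (Fin.le_def.2 hwab)
      · rintro rfl
        exact ⟨ha.lt, le_rfl, hvi, le_rfl⟩
    rw [← ih hs, ← hstep]
    simp only [hrect, mem_insert]
    by_cases hab : a = b <;> simp [hab, hbs']

lemma bruhatLE_wUF_insert {V : Finset (Fin n)} (hV : ∀ b ∈ V, isNbrF w i b) {a : Fin n}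
    (ha : isNbrF w i a) (haV : a ∉ V) : bruhatLE (wUF w i V) (wUF w i (insert a V)) := by
  obtain ⟨x, y, hxy, h⟩ := exists_wUF_insert_eq_mul_swap w i haV ha.lt.ne'
  refine Relation.ReflTransGen.single ⟨⟨swap x y, ⟨x, y, hxy, rfl⟩, h⟩, ?_⟩
  rw [len_wUF hV, len_wUF (forall_mem_insert _ _ _ |>.2 ⟨ha, hV⟩), card_insert_of_notMem haV]
  ring

lemma bruhatLE_wUF_of_subset {U U' : Finset (Fin n)} (hU' : ∀ a ∈ U', isNbrF w i a)
    (h : U ⊆ U') : bruhatLE (wUF w i U) (wUF w i U') := by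
  suffices ∀ D : Finset (Fin n), Disjoint U D → (∀ a ∈ U ∪ D, isNbrF w i a) →
      bruhatLE (wUF w i U) (wUF w i (U ∪ D)) by
    rw [← union_sdiff_of_subset h] at hU' ⊢
    exact this _ disjoint_sdiff hU'
  intro D
  induction D using Finset.induction_on with
  | empty => intros; rw [union_empty]; exact Relation.ReflTransGen.refl
  | insert a D haD ih =>
    intro hdisj hUD
    rw [disjoint_insert_right] at hdisj
    rw [union_insert, forall_mem_insert] at hUD
    rw [union_insert]
    exact (ih hdisj.2 hUD.2).trans
      (bruhatLE_wUF_insert hUD.2 hUD.1 (notMem_union.2 ⟨hdisj.1, haD⟩))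

end Neighbors

/-- Lemma 4.7(1): for `U, U' ⊆ φ_i(w)`, one has `w_{U,i} ≤ w_{U',i}` in Bruhat
order if and only if `U ⊆ U'`. Consequently `{w_{U,i} : U ⊆ φ_i(w)}` is a
Boolean lattice under Bruhat order. -/
theorem wU_le_iff_subset {n : ℕ} (w : Equiv.Perm (Fin n)) (i : Fin n)
    (U U' : Finset (Fin n)) (hU : ∀ a ∈ U, isNbrF w i a)
    (hU' : ∀ a ∈ U', isNbrF w i a) :
    bruhatLE (wUF w i U) (wUF w i U') ↔ U ⊆ U' := by
  refine ⟨fun hle a ha => ?_, bruhatLE_wUF_of_subset hU'⟩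
  have hrk := rk_le_of_bruhatLE hle a (w a)
  have h := rk_wUF_add_ite hU (hU a ha)
  have h' := rk_wUF_add_ite hU' (hU a ha)
  rw [if_pos ha] at h
  by_contra ha'
  rw [if_neg ha'] at h'
  omega
end

section
/- Let w ∈ S_n with w ≠ w₀ and (i,j) an addable cell of dom(w) with j = α(w). The element w_{U,i} ∈ Φ̄_i(w) has a descent at position i if and only if w_{U,i} ≥ w s_i in Bruhat order, if and only if i+1 ∈ U. -/
/-- The value `w(i)` in 1-based one-line notation, for the permutation of
`{1, …, n}` determined by `w : Equiv.Perm (Fin n)` (extended by the identity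
outside `[1,n]`, matching the embedding `S_n ↪ S_+`). -/
def act {n : ℕ} (w : Equiv.Perm (Fin n)) (i : ℕ) : ℕ :=
  if h : 1 ≤ i ∧ i ≤ n then ((w ⟨i - 1, by omega⟩ : Fin n) : ℕ) + 1 else i

/-- The Rothe diagram `D(w) = {(i,j) : w(i) > j and w⁻¹(j) > i}`, 1-based. -/
def rd {n : ℕ} (w : Equiv.Perm (Fin n)) : Set (ℕ × ℕ) :=
  {p | 1 ≤ p.1 ∧ 1 ≤ p.2 ∧ p.2 < act w p.1 ∧ p.1 < act w⁻¹ p.2}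

/-- The dominant part `dom(w)` of the Rothe diagram: the largest Young-diagram
shaped subset, i.e. cells whose whole upper-left rectangle lies in `D(w)`. -/
def domP {n : ℕ} (w : Equiv.Perm (Fin n)) : Set (ℕ × ℕ) :=
  {p | 1 ≤ p.1 ∧ 1 ≤ p.2 ∧
    ∀ q : ℕ × ℕ, 1 ≤ q.1 → 1 ≤ q.2 → q.1 ≤ p.1 → q.2 ≤ p.2 → q ∈ rd w}

/-- `(i,j)` is an addable cell of `dom(w)`. -/
def addableP {n : ℕ} (w : Equiv.Perm (Fin n)) (i j : ℕ) : Prop :=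
  1 ≤ i ∧ 1 ≤ j ∧ (i, j) ∉ domP w ∧
    (1 < i → (i - 1, j) ∈ domP w) ∧ (1 < j → (i, j - 1) ∈ domP w)

/-- `(i,j)` is an addable cell of `dom(w)` with `j = α(w)`, i.e. `i + j ≤ n` and
`j` is the leftmost column containing an addable cell `(i',j')` with `i'+j' ≤ n`. -/
def alphaCell {n : ℕ} (w : Equiv.Perm (Fin n)) (i j : ℕ) : Prop :=
  addableP w i j ∧ i + j ≤ n ∧
    ∀ i' j', addableP w i' j' → i' + j' ≤ n → j ≤ j'

/-- `(a, w(a))` is a neighbor of `(i, w(i))` in the graph of `w` (1-based):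
`i ≤ a`, `w(i) ≤ w(a)`, `(a, w(a)) ≠ (i, w(i))`, and no other point of the
graph of `w` lies in the rectangle `[i,a] × [w(i), w(a)]`. -/
def isNbrP {n : ℕ} (w : Equiv.Perm (Fin n)) (i a : ℕ) : Prop :=
  i ≤ a ∧ act w i ≤ act w a ∧ (a, act w a) ≠ (i, act w i) ∧
    ∀ a', i ≤ a' → a' ≤ a → act w i ≤ act w a' → act w a' ≤ act w a →
      a' = i ∨ a' = a

/-- The transposition `t_{i,j}` of the 1-based positions `i, j ∈ [n]`. -/
def tpos (n i j : ℕ) : Equiv.Perm (Fin n) :=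
  if h : 1 ≤ i ∧ i ≤ n ∧ 1 ≤ j ∧ j ≤ n then
    Equiv.swap ⟨i - 1, by omega⟩ ⟨j - 1, by omega⟩ else 1

/-- For `U = {i_1 < i_2 < ⋯ < i_k}` (1-based positions), the permutation
`w_{U,i} = w t_{i,i_k} t_{i,i_{k-1}} ⋯ t_{i,i_1}` (and `w_{∅,i} = w`). -/
def wUp {n : ℕ} (w : Equiv.Perm (Fin n)) (i : ℕ) (U : Finset ℕ) :
    Equiv.Perm (Fin n) :=
  ((U.sort (· ≤ ·)).reverse).foldl (fun v j => v * tpos n i j) w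

/-!
By the choice of `j = α(w)`, the cell `(i, j)` lies on the graph of `w` and `w(i) < w(i+1)`:
otherwise `(i+1, w(i+1))` would be an addable cell in a column left of `j`. The neighbours
`a_1 < ⋯ < a_k` of `i` then have decreasing values, all below `w(i+1)` unless `a_1 = i + 1`, and
`w_{U,i}` puts `w(min U)` at position `i` while fixing every position outside `U ∪ {i}`; so
`w_{U,i}` has a descent at `i` exactly when `i + 1 ∈ U`.

If `i + 1 ∈ U`, then `w_{U,i} = (w s_i)_{U ∖ {i+1}, i+1}`, the elements of `U ∖ {i+1}` are
neighbours of `i + 1` in `w s_i`, and each factor `t_{i+1,a}` is a Bruhat cover, since it exchanges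
two values with no point of the graph in between. If `i + 1 ∉ U`, then among its first `i`
positions `w_{U,i}` has more values `≤ w_{U,i}(i)` than `w s_i` has, whereas going up in Bruhat
order can only lower these rank numbers.
-/

open Equiv Finset

section Act

variable {n : ℕ}

lemma act_of_mem (w : Perm (Fin n)) {x : ℕ} (h1 : 1 ≤ x) (h2 : x ≤ n) :
    act w x = (w ⟨x - 1, by omega⟩ : ℕ) + 1 := by
  simp [act, h1, h2]

lemma act_of_notMem (w : Perm (Fin n)) {x : ℕ} (h : ¬(1 ≤ x ∧ x ≤ n)) : act w x = x := by
  simp [act, h]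

lemma act_val_succ (w : Perm (Fin n)) (m : Fin n) : act w (m + 1) = (w m : ℕ) + 1 := by
  rw [act_of_mem w (by omega) (by omega)]
  simp

lemma one_le_act (w : Perm (Fin n)) {x : ℕ} (h1 : 1 ≤ x) (h2 : x ≤ n) : 1 ≤ act w x := by
  rw [act_of_mem w h1 h2]; omega

lemma act_le (w : Perm (Fin n)) {x : ℕ} (h1 : 1 ≤ x) (h2 : x ≤ n) : act w x ≤ n := by
  rw [act_of_mem w h1 h2]; omega

lemma act_mul (u v : Perm (Fin n)) (x : ℕ) : act (u * v) x = act u (act v x) := by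
  by_cases h : 1 ≤ x ∧ x ≤ n
  · obtain ⟨m, rfl⟩ : ∃ m : Fin n, x = m + 1 := ⟨⟨x - 1, by omega⟩, by dsimp only; omega⟩
    rw [act_val_succ, act_val_succ, act_val_succ, Perm.mul_apply]
  · rw [act_of_notMem _ h, act_of_notMem _ h, act_of_notMem _ h]

lemma act_one (x : ℕ) : act (1 : Perm (Fin n)) x = x := by
  by_cases h : 1 ≤ x ∧ x ≤ n
  · rw [act_of_mem _ h.1 h.2, Perm.one_apply, Fin.val_mk]
    omega
  · exact act_of_notMem _ h

lemma act_inv_act (w : Perm (Fin n)) (x : ℕ) : act w⁻¹ (act w x) = x := by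
  rw [← act_mul, inv_mul_cancel, act_one]

lemma act_act_inv (w : Perm (Fin n)) (x : ℕ) : act w (act w⁻¹ x) = x := by
  rw [← act_mul, mul_inv_cancel, act_one]

lemma act_injective (w : Perm (Fin n)) : Function.Injective (act w) :=
  Function.LeftInverse.injective (act_inv_act w)

end Act

section Length

variable {n : ℕ}

def relInversions (σ x : Perm (Fin n)) : Finset (Fin n × Fin n) :=
  {p | σ p.1 < σ p.2 ∧ x p.2 < x p.1}

@[simp]
lemma mem_relInversions {σ x : Perm (Fin n)} {p : Fin n × Fin n} :
    p ∈ relInversions σ x ↔ σ p.1 < σ p.2 ∧ x p.2 < x p.1 := by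
  simp [relInversions]

lemma len_eq_card_relInversions_one (x : Perm (Fin n)) : len x = #(relInversions 1 x) := rfl

lemma len_mul_inv_eq_card_relInversions (x σ : Perm (Fin n)) :
    len (x * σ⁻¹) = #(relInversions σ x) := by
  unfold len relInversions
  refine card_nbij' (Prod.map ⇑σ⁻¹ ⇑σ⁻¹) (Prod.map σ σ) ?_ ?_ ?_ ?_ <;>
    rintro ⟨a, b⟩ <;> simp only [mem_coe, mem_filter_univ] <;> simp

lemma len_mul_inv_add_card_sdiff (x σ : Perm (Fin n)) :
    len (x * σ⁻¹) + #(relInversions 1 x \ relInversions σ x) =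
      len x + #(relInversions σ x \ relInversions 1 x) := by
  rw [len_mul_inv_eq_card_relInversions, len_eq_card_relInversions_one,
    ← card_inter_add_card_sdiff, ← card_inter_add_card_sdiff (relInversions 1 x), inter_comm]
  ring

variable (x : Perm (Fin n)) {u v : Fin n}

/- Relabelling positions by `swap u v` sends the inversions lost in `x * swap u v` injectively to
the gained ones other than `(v, u)`, and onto them when no value of `x` on `(u, v)` lies between
`x u` and `x v`. -/

lemma mapsTo_sdiff_relInversions_swap (huv : u < v) (hx : x u < x v) :
    Set.MapsTo (Prod.map (swap u v) (swap u v))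
      ↑(relInversions 1 x \ relInversions (swap u v) x)
      ↑((relInversions (swap u v) x \ relInversions 1 x).erase (v, u)) := by
  rintro ⟨a, b⟩
  simp only [mem_coe, mem_sdiff, mem_erase, mem_relInversions, Prod.map, Perm.one_apply, ne_eq,
    Prod.mk.injEq, swap_apply_self]
  simp only [swap_apply_def]
  grind

lemma mapsTo_sdiff_relInversions_swap_of_forall (huv : u < v)
    (hno : ∀ c, u < c → c < v → ¬(x u < x c ∧ x c < x v)) :
    Set.MapsTo (Prod.map (swap u v) (swap u v))
      ↑((relInversions (swap u v) x \ relInversions 1 x).erase (v, u))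
      ↑(relInversions 1 x \ relInversions (swap u v) x) := by
  rintro ⟨a, b⟩
  have := x.injective
  simp only [mem_coe, mem_sdiff, mem_erase, mem_relInversions, Prod.map, Perm.one_apply, ne_eq,
    Prod.mk.injEq, swap_apply_self]
  simp only [swap_apply_def]
  grind

lemma swap_mem_sdiff_relInversions_swap (huv : u < v) (hx : x u < x v) :
    (v, u) ∈ relInversions (swap u v) x \ relInversions 1 x := by
  simp [huv.not_gt, hx, huv]

lemma len_lt_len_mul_swap (huv : u < v) (hx : x u < x v) : len x < len (x * swap u v) := by
  have key := len_mul_inv_add_card_sdiff x (swap u v)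
  have hle := card_le_card_of_injOn _ (mapsTo_sdiff_relInversions_swap x huv hx)
    ((swap u v).injective.prodMap (swap u v).injective).injOn
  rw [card_erase_of_mem (swap_mem_sdiff_relInversions_swap x huv hx)] at hle
  rw [swap_inv] at key
  have := card_pos.2 ⟨_, swap_mem_sdiff_relInversions_swap x huv hx⟩
  omega

lemma len_mul_swap_of_forall (huv : u < v) (hx : x u < x v)
    (hno : ∀ c, u < c → c < v → ¬(x u < x c ∧ x c < x v)) :
    len (x * swap u v) = len x + 1 := by
  have key := len_mul_inv_add_card_sdiff x (swap u v)
  have hinj := (swap u v).injective.prodMap (swap u v).injective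
  have hle := card_le_card_of_injOn _ (mapsTo_sdiff_relInversions_swap x huv hx) hinj.injOn
  have hge := card_le_card_of_injOn _ (mapsTo_sdiff_relInversions_swap_of_forall x huv hno)
    hinj.injOn
  rw [card_erase_of_mem (swap_mem_sdiff_relInversions_swap x huv hx)] at hle hge
  rw [swap_inv] at key
  have := card_pos.2 ⟨_, swap_mem_sdiff_relInversions_swap x huv hx⟩
  omega

end Length

section Rank

variable {n : ℕ} (x : Perm (Fin n)) {u v : Fin n}

lemma rk_mul_swap_le (huv : u < v) (hx : x u < x v) (a b : ℕ) :
    rk (x * swap u v) a b ≤ rk x a b := by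
  unfold rk
  rw [Fin.lt_def] at huv hx
  refine card_le_card_of_injOn (fun m => if m = v ∧ b ≤ (x v : ℕ) then u else m)
    (fun m hm => ?_) (fun m₁ h₁ m₂ h₂ => ?_) <;>
    simp only [mem_coe, mem_filter_univ, Perm.mul_apply, swap_apply_def] at * <;> grind

lemma rk_lt_rk_of_eqOn (v z : Perm (Fin n)) {i b : ℕ} (hi : 1 ≤ i) (hin : i ≤ n)
    (heq : ∀ c, 1 ≤ c → c < i → act v c = act z c) (hv : act v i ≤ b) (hz : b < act z i) :
    rk z i b < rk v i b := by
  have hi' : ((⟨i - 1, by omega⟩ : Fin n) : ℕ) + 1 = i := by dsimp only; omega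
  refine card_lt_card
    ((ssubset_iff_of_subset fun m hm => ?_).2 ⟨⟨i - 1, by omega⟩, ?_, ?_⟩) <;>
    simp only [mem_filter_univ] at *
  · have hm' : (m : ℕ) + 1 < i := by
      refine lt_of_le_of_ne hm.1 fun hmi => ?_
      have := act_val_succ z m
      rw [hmi] at this
      omega
    have := heq _ (by omega) hm'
    rw [act_val_succ, act_val_succ] at this
    omega
  · have := act_val_succ v ⟨i - 1, by omega⟩
    rw [hi'] at this
    exact ⟨by omega, by omega⟩
  · have := act_val_succ z ⟨i - 1, by omega⟩
    rw [hi'] at this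
    omega

end Rank

section Bruhat

variable {n : ℕ} {x y : Perm (Fin n)}

lemma apply_lt_apply_of_len_lt_len_mul_swap {u v : Fin n} (huv : u < v)
    (h : len x < len (x * swap u v)) : x u < x v := by
  by_contra hle
  have hlt : x v < x u := lt_of_le_of_ne (not_lt.1 hle) (x.injective.ne huv.ne')
  have := len_lt_len_mul_swap (x * swap u v) huv (by simpa using hlt)
  rw [mul_assoc, swap_mul_self, mul_one] at this
  omega

lemma rk_le_rk_of_covBy (h : (∃ t : Perm (Fin n), t.IsSwap ∧ y = x * t) ∧ len y = len x + 1)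
    (a b : ℕ) : rk y a b ≤ rk x a b := by
  obtain ⟨⟨_, ⟨u, v, huv, rfl⟩, rfl⟩, hlen⟩ := h
  rcases huv.lt_or_gt with huv | hvu
  · exact rk_mul_swap_le x huv (apply_lt_apply_of_len_lt_len_mul_swap huv (by omega)) a b
  · rw [swap_comm] at hlen ⊢
    exact rk_mul_swap_le x hvu (apply_lt_apply_of_len_lt_len_mul_swap hvu (by omega)) a b

lemma rk_le_rk_of_bruhatLE (h : bruhatLE x y) (a b : ℕ) : rk y a b ≤ rk x a b := by
  induction h with
  | refl => rfl
  | tail _ hcov ih => exact (rk_le_rk_of_covBy hcov a b).trans ih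

end Bruhat

section Transpositions

variable {n : ℕ} {p q : ℕ}

lemma tpos_eq_swap (hp1 : 1 ≤ p) (hpn : p ≤ n) (hq1 : 1 ≤ q) (hqn : q ≤ n) :
    tpos n p q = swap ⟨p - 1, by omega⟩ ⟨q - 1, by omega⟩ := by
  rw [tpos, dif_pos ⟨hp1, hpn, hq1, hqn⟩]

lemma simpleRefl_eq_tpos {i : ℕ} (hi : 1 ≤ i) (hin : i + 1 ≤ n) :
    simpleRefl n i = tpos n i (i + 1) := by
  rw [simpleRefl, dif_pos ⟨hi, by omega⟩, tpos_eq_swap hi (by omega) (by omega) hin]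
  rfl

lemma act_tpos (hp1 : 1 ≤ p) (hpn : p ≤ n) (hq1 : 1 ≤ q) (hqn : q ≤ n) (x : ℕ) :
    act (tpos n p q) x = if x = p then q else if x = q then p else x := by
  by_cases hx : 1 ≤ x ∧ x ≤ n
  · rw [tpos_eq_swap hp1 hpn hq1 hqn, act_of_mem _ hx.1 hx.2, swap_apply_def]
    simp only [Fin.ext_iff]
    split_ifs <;> simp only at * <;> omega
  · rw [act_of_notMem _ hx, if_neg (by omega), if_neg (by omega)]

variable (v : Perm (Fin n))

lemma act_mul_tpos_left (hp1 : 1 ≤ p) (hpn : p ≤ n) (hq1 : 1 ≤ q) (hqn : q ≤ n) :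
    act (v * tpos n p q) p = act v q := by
  rw [act_mul, act_tpos hp1 hpn hq1 hqn, if_pos rfl]

lemma act_mul_tpos_right (hp1 : 1 ≤ p) (hpn : p ≤ n) (hq1 : 1 ≤ q) (hqn : q ≤ n) :
    act (v * tpos n p q) q = act v p := by
  rw [act_mul, act_tpos hp1 hpn hq1 hqn]
  by_cases h : q = p <;> simp [h]

lemma act_mul_tpos_of_ne {x : ℕ} (hxp : x ≠ p) (hxq : x ≠ q) :
    act (v * tpos n p q) x = act v x := by
  rw [act_mul, tpos]
  split_ifs with h
  · rw [← tpos_eq_swap h.1 h.2.1 h.2.2.1 h.2.2.2, act_tpos h.1 h.2.1 h.2.2.1 h.2.2.2, if_neg hxp,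
      if_neg hxq]
  · rw [act_one]

lemma tpos_mul_tpos_succ {i a : ℕ} (hi : 1 ≤ i) (hia : i + 1 < a) (han : a ≤ n) :
    tpos n i a * tpos n i (i + 1) = tpos n i (i + 1) * tpos n (i + 1) a := by
  rw [tpos_eq_swap hi (by omega) (by omega) han, tpos_eq_swap hi (by omega) (by omega) (by omega),
    tpos_eq_swap (by omega) (by omega) (by omega) han, swap_mul_eq_mul_swap, swap_inv,
    swap_apply_left, swap_apply_of_ne_of_ne (by simp only [ne_eq, Fin.mk.injEq]; omega)
      (by simp only [ne_eq, Fin.mk.injEq]; omega)]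

lemma len_mul_tpos (x : Perm (Fin n)) (hp1 : 1 ≤ p) (hpq : p < q) (hqn : q ≤ n)
    (hx : act x p < act x q)
    (hno : ∀ c, p < c → c < q → ¬(act x p < act x c ∧ act x c < act x q)) :
    len (x * tpos n p q) = len x + 1 := by
  rw [tpos_eq_swap hp1 (by omega) (by omega) hqn]
  rw [act_of_mem x hp1 (by omega), act_of_mem x (by omega) hqn] at hx
  refine len_mul_swap_of_forall x (Fin.mk_lt_mk.2 (by omega)) (Fin.lt_def.2 (by omega)) ?_
  intro c (hpc : p - 1 < c) (hcq : c < q - 1)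
  have := hno (c + 1) (by omega) (by omega)
  rw [act_val_succ, act_of_mem x hp1 (by omega), act_of_mem x (by omega) hqn] at this
  rw [Fin.lt_def, Fin.lt_def]
  omega

lemma bruhatLE_mul_tpos (x : Perm (Fin n)) (hp1 : 1 ≤ p) (hpq : p < q) (hqn : q ≤ n)
    (hx : act x p < act x q)
    (hno : ∀ c, p < c → c < q → ¬(act x p < act x c ∧ act x c < act x q)) :
    bruhatLE x (x * tpos n p q) := by
  refine .single ⟨⟨tpos n p q, ?_, rfl⟩, len_mul_tpos x hp1 hpq hqn hx hno⟩
  rw [tpos_eq_swap hp1 (by omega) (by omega) hqn]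
  exact ⟨_, _, by simp only [ne_eq, Fin.mk.injEq]; omega, rfl⟩

end Transpositions

section WUp

variable {n : ℕ} (x : Perm (Fin n)) {p : ℕ}

@[simp]
lemma wUp_empty : wUp x p ∅ = x := by
  simp [wUp]

lemma wUp_insert_of_forall_lt {a : ℕ} {s : Finset ℕ} (h : ∀ b ∈ s, a < b) :
    wUp x p (insert a s) = wUp x p s * tpos n p a := by
  have ha : a ∉ s := fun ha => (h a ha).false
  rw [wUp, wUp, sort_insert _ (fun b hb => (h b hb).le) ha]
  simp

lemma wUp_eq_mul_tpos_succ {U : Finset ℕ} (hU : ∀ a ∈ U, p < a) (hsucc : p + 1 ∈ U) :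
    wUp x p U = wUp x p (U.erase (p + 1)) * tpos n p (p + 1) := by
  conv_lhs => rw [← insert_erase hsucc]
  refine wUp_insert_of_forall_lt x fun b hb => ?_
  have := hU b (mem_of_mem_erase hb)
  have := ne_of_mem_erase hb
  omega

lemma act_wUp_of_ne {U : Finset ℕ} {c : ℕ} (hcp : c ≠ p) (hcU : c ∉ U) :
    act (wUp x p U) c = act x c := by
  induction U using Finset.induction_on_min with
  | empty => rw [wUp_empty]
  | insert a s hs ih =>
    rw [mem_insert, not_or] at hcU
    rw [wUp_insert_of_forall_lt x hs, act_mul_tpos_of_ne _ hcp hcU.1, ih hcU.2]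

lemma act_wUp_self_eq_or {U : Finset ℕ} (hp : 1 ≤ p) (hU : ∀ a ∈ U, p < a ∧ a ≤ n) :
    act (wUp x p U) p = act x p ∨ ∃ a ∈ U, act (wUp x p U) p = act x a := by
  induction U using Finset.induction_on_min with
  | empty => simp
  | insert a s hs _ =>
    obtain ⟨hpa, han⟩ := hU a (mem_insert_self a s)
    refine .inr ⟨a, mem_insert_self a s, ?_⟩
    rw [wUp_insert_of_forall_lt x hs, act_mul_tpos_left _ hp (by omega) (by omega) han,
      act_wUp_of_ne x (by omega) fun ha => (hs a ha).false]

lemma wUp_mul_tpos_succ {i : ℕ} {U : Finset ℕ} (hi : 1 ≤ i)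
    (hU : ∀ a ∈ U, i + 1 < a ∧ a ≤ n) :
    wUp x i U * tpos n i (i + 1) = wUp (x * tpos n i (i + 1)) (i + 1) U := by
  induction U using Finset.induction_on_min with
  | empty => simp
  | insert a s hs ih =>
    obtain ⟨hia, han⟩ := hU a (mem_insert_self a s)
    rw [wUp_insert_of_forall_lt x hs, wUp_insert_of_forall_lt _ hs, mul_assoc,
      tpos_mul_tpos_succ hi hia han, ← mul_assoc, ih fun b hb => hU b (mem_insert_of_mem hb)]

end WUp

section Neighbors

variable {n : ℕ} {x : Perm (Fin n)} {p a b : ℕ}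

lemma isNbrP.lt (h : isNbrP x p a) : p < a := by
  obtain ⟨hpa, -, hne, -⟩ := h
  refine lt_of_le_of_ne hpa fun hpa => hne ?_
  rw [hpa]

lemma isNbrP.act_lt (h : isNbrP x p a) : act x p < act x a :=
  lt_of_le_of_ne h.2.1 fun heq => h.lt.ne (act_injective x heq)

lemma isNbrP.not_between (h : isNbrP x p a) {c : ℕ} (hpc : p < c) (hca : c < a) :
    ¬(act x p < act x c ∧ act x c < act x a) := by
  rintro ⟨h₁, h₂⟩
  have := h.2.2.2 c hpc.le hca.le h₁.le h₂.le
  omega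

lemma isNbrP.act_lt_of_lt (ha : isNbrP x p a) (hb : isNbrP x p b) (hab : a < b) :
    act x b < act x a := by
  refine lt_of_not_ge fun hle => ?_
  have := hb.2.2.2 a ha.lt.le hab.le ha.2.1
    (lt_of_le_of_ne hle fun heq => hab.ne (act_injective x heq)).le
  have := ha.lt
  omega

lemma isNbrP.le_of_act_lt_act_succ (ha : isNbrP x p a) (hasc : act x p < act x (p + 1))
    (hpn : p + 1 ≤ n) : a ≤ n := by
  by_contra han
  have hle : act x (p + 1) ≤ act x a := by
    rw [act_of_notMem x (show ¬(1 ≤ a ∧ a ≤ n) by omega)]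
    have := act_le x (by omega : 1 ≤ p + 1) hpn
    omega
  have := ha.2.2.2 (p + 1) (by omega) (by omega) hasc.le hle
  omega

lemma isNbrP.act_lt_act_succ (ha : isNbrP x p a) (hasc : act x p < act x (p + 1))
    (hne : a ≠ p + 1) : act x a < act x (p + 1) := by
  refine lt_of_not_ge fun hle => ?_
  have := ha.2.2.2 (p + 1) (by have := ha.lt; omega) (by have := ha.lt; omega) hasc.le
    (lt_of_le_of_ne hle fun heq => hne (act_injective x heq).symm).le
  omega

lemma isNbrP.mul_tpos_succ (ha : isNbrP x p a) (hp : 1 ≤ p) (hpa : p + 1 < a) (han : a ≤ n) :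
    isNbrP (x * tpos n p (p + 1)) (p + 1) a := by
  have hleft := act_mul_tpos_right x hp (q := p + 1) (by omega) (by omega) (by omega)
  have hother : ∀ c, p + 1 < c → act (x * tpos n p (p + 1)) c = act x c := fun c hc =>
    act_mul_tpos_of_ne x (by omega) (by omega)
  rw [isNbrP, hleft, hother a hpa]
  refine ⟨hpa.le, ha.act_lt.le, by simp only [ne_eq, Prod.mk.injEq]; omega, fun c hc hca hlo hhi => ?_⟩
  rcases hc.eq_or_lt with rfl | hc
  · exact .inl rfl
  · rw [hother c hc] at hlo hhi
    exact (ha.2.2.2 c (by omega) hca hlo hhi).imp_left fun h => by omega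

lemma bruhatLE_wUp (hp : 1 ≤ p) {U : Finset ℕ} (hU : ∀ a ∈ U, isNbrP x p a ∧ a ≤ n) :
    bruhatLE x (wUp x p U) := by
  induction U using Finset.induction_on_min with
  | empty => rw [wUp_empty]; exact .refl
  | insert a s hs ih =>
    obtain ⟨ha, han⟩ := hU a (mem_insert_self a s)
    have hs' : ∀ b ∈ s, isNbrP x p b ∧ b ≤ n := fun b hb => hU b (mem_insert_of_mem hb)
    set y := wUp x p s
    have hya : act y a = act x a := act_wUp_of_ne x ha.lt.ne' fun has => (hs a has).false
    have hyc : ∀ c, p < c → c < a → act y c = act x c := fun c hpc hca =>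
      act_wUp_of_ne x hpc.ne' fun hcs => (hca.trans (hs c hcs)).false
    have hyp : act x p ≤ act y p ∧ act y p < act x a := by
      rcases act_wUp_self_eq_or x hp fun b hb => ⟨(hs' b hb).1.lt, (hs' b hb).2⟩ with
        hyp | ⟨b, hb, hyp⟩
      · exact ⟨hyp.ge, hyp ▸ ha.act_lt⟩
      · exact ⟨hyp ▸ (hs' b hb).1.act_lt.le, hyp ▸ ha.act_lt_of_lt (hs' b hb).1 (hs b hb)⟩
    rw [wUp_insert_of_forall_lt x hs]
    refine (ih hs').trans (bruhatLE_mul_tpos y hp ha.lt han (hya ▸ hyp.2) fun c hpc hca => ?_)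
    rw [hya, hyc c hpc hca]
    exact fun hc => ha.not_between hpc hca ⟨hyp.1.trans_lt hc.1, hc.2⟩

end Neighbors

section AlphaCell

variable {n : ℕ} {w : Perm (Fin n)} {i j : ℕ}

lemma mem_rd_iff {a b : ℕ} :
    (a, b) ∈ rd w ↔ 1 ≤ a ∧ 1 ≤ b ∧ b < act w a ∧ a < act w⁻¹ b := Iff.rfl

lemma mem_domP_iff {a b : ℕ} : (a, b) ∈ domP w ↔ 1 ≤ a ∧ 1 ≤ b ∧
    ∀ a' b', 1 ≤ a' → 1 ≤ b' → a' ≤ a → b' ≤ b → (a', b') ∈ rd w := by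
  simp only [domP, Set.mem_ofPred_eq, Prod.forall]

lemma alphaCell.mem_rd (h : alphaCell w i j) {a b : ℕ} (ha : 1 ≤ a) (hb : 1 ≤ b)
    (hai : a ≤ i) (hbj : b ≤ j) (hlt : a < i ∨ b < j) : (a, b) ∈ rd w := by
  obtain ⟨⟨-, -, -, hup, hleft⟩, -⟩ := h
  by_cases hai' : a < i
  · exact (mem_domP_iff.1 (hup (by omega))).2.2 a b ha hb (by omega) hbj
  · exact (mem_domP_iff.1 (hleft (by omega))).2.2 a b ha hb hai (by omega)

lemma alphaCell.act_eq (h : alphaCell w i j) : act w i = j := by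
  obtain ⟨⟨hi, hj, hdom, -, -⟩, hijn, -⟩ := id h
  have hnot : ¬(j < act w i ∧ i < act w⁻¹ j) := by
    refine fun hrd => hdom (mem_domP_iff.2 ⟨hi, hj, fun a b ha hb hai hbj => ?_⟩)
    by_cases hlt : a < i ∨ b < j
    · exact h.mem_rd ha hb hai hbj hlt
    · obtain ⟨rfl, rfl⟩ : a = i ∧ b = j := by omega
      exact ⟨hi, hj, hrd⟩
  have hle : j ≤ act w i := by
    by_cases hj1 : j = 1
    · exact hj1 ▸ one_le_act w hi (by omega)
    · have := h.mem_rd hi (b := j - 1) (by omega) le_rfl (by omega) (by omega)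
      have := (mem_rd_iff.1 this).2.2.1
      omega
  have hle' : i ≤ act w⁻¹ j := by
    by_cases hi1 : i = 1
    · exact hi1 ▸ one_le_act w⁻¹ hj (by omega)
    · have := h.mem_rd (a := i - 1) (by omega) hj (by omega) le_rfl (by omega)
      have := (mem_rd_iff.1 this).2.2.2
      omega
  by_contra hne
  have : act w⁻¹ j = i := by omega
  exact hne (this ▸ act_act_inv w j)

lemma alphaCell.addableP_succ (h : alphaCell w i j) (hlt : act w (i + 1) < j) :
    addableP w (i + 1) (act w (i + 1)) := by
  obtain ⟨⟨hi, hj, -, -, -⟩, hijn, -⟩ := id h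
  set j' := act w (i + 1)
  have hj' : 1 ≤ j' := one_le_act w (by omega) (by omega)
  have hinv : act w⁻¹ j' = i + 1 := act_inv_act w (i + 1)
  refine ⟨by omega, hj', fun hdom => ?_, fun _ => ?_, fun hj'1 => ?_⟩
  · have := (mem_rd_iff.1 ((mem_domP_iff.1 hdom).2.2 _ _ (by omega) hj' le_rfl le_rfl)).2.2.2
    omega
  · refine mem_domP_iff.2 ⟨by omega, hj', fun a b ha hb hai hbj => ?_⟩
    exact h.mem_rd ha hb (by omega) (by omega) (by omega)
  · refine mem_domP_iff.2 ⟨by omega, by omega, fun a b ha hb hai hbj => ?_⟩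
    by_cases hai' : a ≤ i
    · exact h.mem_rd ha hb hai' (by omega) (by omega)
    · have hrow := (mem_rd_iff.1 (h.mem_rd hi hb le_rfl (by omega) (by omega))).2.2.2
      have hne : act w⁻¹ b ≠ i + 1 := fun heq => by
        have := act_act_inv w b
        rw [heq] at this
        omega
      obtain rfl : a = i + 1 := by omega
      exact mem_rd_iff.2 ⟨ha, hb, by omega, by omega⟩

lemma alphaCell.act_lt_act_succ (h : alphaCell w i j) : act w i < act w (i + 1) := by
  by_contra hle
  have hne : act w (i + 1) ≠ act w i := fun heq => by simpa using act_injective w heq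
  have hlt : act w (i + 1) < j := h.act_eq ▸ lt_of_le_of_ne (not_lt.1 hle) hne
  have := h.2.2 _ _ (h.addableP_succ hlt) (by have := h.2.1; omega)
  omega

end AlphaCell

section Descent

variable {n : ℕ} {w : Perm (Fin n)} {p : ℕ} {U : Finset ℕ}

lemma act_wUp_self_lt_act_succ (hp : 1 ≤ p) (hpn : p + 1 ≤ n) (hasc : act w p < act w (p + 1))
    (hU : ∀ a ∈ U, isNbrP w p a) (hsucc : p + 1 ∉ U) : act (wUp w p U) p < act w (p + 1) := by
  rcases act_wUp_self_eq_or w hp fun a ha =>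
      ⟨(hU a ha).lt, (hU a ha).le_of_act_lt_act_succ hasc hpn⟩ with h | ⟨a, ha, h⟩
  · exact h ▸ hasc
  · exact h ▸ (hU a ha).act_lt_act_succ hasc (ne_of_mem_of_not_mem ha hsucc)

lemma act_wUp_succ_lt_iff (hp : 1 ≤ p) (hpn : p + 1 ≤ n) (hasc : act w p < act w (p + 1))
    (hU : ∀ a ∈ U, isNbrP w p a) :
    act (wUp w p U) (p + 1) < act (wUp w p U) p ↔ p + 1 ∈ U := by
  by_cases hsucc : p + 1 ∈ U
  · refine iff_of_true ?_ hsucc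
    have hU' : ∀ a ∈ U.erase (p + 1), isNbrP w p a := fun a ha => hU a (mem_of_mem_erase ha)
    rw [wUp_eq_mul_tpos_succ w (fun a ha => (hU a ha).lt) hsucc,
      act_mul_tpos_right _ hp (by omega) (by omega) hpn,
      act_mul_tpos_left _ hp (by omega) (by omega) hpn,
      act_wUp_of_ne w (by omega) (notMem_erase _ _)]
    exact act_wUp_self_lt_act_succ hp hpn hasc hU' (notMem_erase _ _)
  · refine iff_of_false ?_ hsucc
    rw [act_wUp_of_ne w (by omega) hsucc, not_lt]
    exact (act_wUp_self_lt_act_succ hp hpn hasc hU hsucc).le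

lemma bruhatLE_mul_simpleRefl_wUp (hp : 1 ≤ p) (hpn : p + 1 ≤ n)
    (hasc : act w p < act w (p + 1)) (hU : ∀ a ∈ U, isNbrP w p a) (hsucc : p + 1 ∈ U) :
    bruhatLE (w * simpleRefl n p) (wUp w p U) := by
  have hU' : ∀ a ∈ U.erase (p + 1), p + 1 < a ∧ a ≤ n := fun a ha =>
    ⟨lt_of_le_of_ne (hU a (mem_of_mem_erase ha)).lt (ne_of_mem_erase ha).symm,
      (hU a (mem_of_mem_erase ha)).le_of_act_lt_act_succ hasc hpn⟩
  rw [wUp_eq_mul_tpos_succ w (fun a ha => (hU a ha).lt) hsucc, wUp_mul_tpos_succ w hp hU',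
    simpleRefl_eq_tpos hp hpn]
  exact bruhatLE_wUp (by omega) fun a ha =>
    ⟨(hU a (mem_of_mem_erase ha)).mul_tpos_succ hp (hU' a ha).1 (hU' a ha).2, (hU' a ha).2⟩

lemma not_bruhatLE_mul_simpleRefl_wUp (hp : 1 ≤ p) (hpn : p + 1 ≤ n)
    (hasc : act w p < act w (p + 1)) (hU : ∀ a ∈ U, isNbrP w p a) (hsucc : p + 1 ∉ U) :
    ¬bruhatLE (w * simpleRefl n p) (wUp w p U) := by
  intro hle
  rw [simpleRefl_eq_tpos hp hpn] at hle
  have hlt := rk_lt_rk_of_eqOn (wUp w p U) (w * tpos n p (p + 1)) hp (by omega)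
    (fun c _ hcp => by
      rw [act_wUp_of_ne w hcp.ne fun hc => by have := (hU c hc).lt; omega,
        act_mul_tpos_of_ne w hcp.ne (by omega)])
    le_rfl
    (by
      rw [act_mul_tpos_left w hp (by omega) (by omega) hpn]
      exact act_wUp_self_lt_act_succ hp hpn hasc hU hsucc)
  have := rk_le_rk_of_bruhatLE hle p (act (wUp w p U) p)
  omega

end Descent

theorem wU_descent_iff_general {n : ℕ} (w : Equiv.Perm (Fin n)) (i j : ℕ) (U : Finset ℕ)
    (h : alphaCell w i j) (hU : ∀ a ∈ U, isNbrP w i a) :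
    ((act (wUp w i U) (i + 1) < act (wUp w i U) i) ↔
        bruhatLE (w * simpleRefl n i) (wUp w i U)) ∧
    ((act (wUp w i U) (i + 1) < act (wUp w i U) i) ↔ (i + 1) ∈ U) := by
  have hi : 1 ≤ i := h.1.1
  have hin : i + 1 ≤ n := by have := h.1.2.1; have := h.2.1; omega
  have hasc := h.act_lt_act_succ
  have hdesc := act_wUp_succ_lt_iff hi hin hasc hU
  refine ⟨?_, hdesc⟩
  rw [hdesc]
  exact ⟨bruhatLE_mul_simpleRefl_wUp hi hin hasc hU, fun hle => by_contra fun hsucc =>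
    not_bruhatLE_mul_simpleRefl_wUp hi hin hasc hU hsucc hle⟩

/-- Lemma 5.1(4)-(5): if `w ≠ w₀`, `(i,j)` is an addable cell of `dom(w)` with
`j = α(w)`, and `∅ ≠ U ⊆ φ_i(w)`, then `w_{U,i}` has a descent at `i`
iff `w_{U,i} ≥ w s_i` in Bruhat order, iff `i+1 ∈ U`. -/
theorem wU_descent_iff {n : ℕ} (w : Equiv.Perm (Fin n)) (i j : ℕ) (U : Finset ℕ)
    (hw : w ≠ longest n) (h : alphaCell w i j)
    (hne : U.Nonempty) (hU : ∀ a ∈ U, isNbrP w i a) :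
    ((act (wUp w i U) (i + 1) < act (wUp w i U) i) ↔
        bruhatLE (w * simpleRefl n i) (wUp w i U)) ∧
    ((act (wUp w i U) (i + 1) < act (wUp w i U) i) ↔ (i + 1) ∈ U) :=
  wU_descent_iff_general w i j U h hU
end
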